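/- arXiv:2011.00078 — 4 statements merged into one kernel-verified Lean document; each statement's English description precedes it below -/
import Mathlib

section
/- Let M be a measurable space, κ a Markov kernel from M to M, and μ a probability measure on M invariant for κ (i.e. μ.bind κ = μ). Let ν be the law on path space ℕ → M of the time-homogeneous Markov chain with transition kernel κ and initial distribution μ (constructed via the Ionescu–Tulcea theorem), and let S : (ℕ → M) → (ℕ → M) be the shift map (S u) n = u (n+1). Then S is measure-preserving with respect to ν. -/
/-
The shifted path measure `ν.map shift` has the transition structure of the chain again,
started from the law of `u 1`, which is `κ ∘ₘ μ`.  A path measure is determined by its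
initial law, since its finite-dimensional marginals are then determined by induction and
these fix its values on the π-system of cylinders.  Invariance `κ ∘ₘ μ = μ` therefore
makes `ν.map shift` and `ν` path measures of the same chain, hence equal.
-/

open MeasureTheory ProbabilityTheory Filter

/-- The shift map on path space: `(shift u) n = u (n+1)`. -/
def shift {M : Type*} (u : ℕ → M) : ℕ → M := fun n => u (n + 1)

/-- `ν` is the law on path space `ℕ → M` of the time-homogeneous Markov chain with
transition kernel `κ` and initial distribution `μ` (the measure produced by the
Ionescu–Tulcea theorem), characterized by its finite-dimensional distributions:
the initial law is `μ`, and the conditional law of `u (n+1)` given `(u 0, …, u n)`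
is `κ (u n)`. -/
def IsPathMeasure {M : Type*} [MeasurableSpace M] (κ : Kernel M M) [IsMarkovKernel κ]
    (μ : Measure M) (ν : Measure (ℕ → M)) : Prop :=
  IsProbabilityMeasure ν ∧
  ν.map (fun u => u 0) = μ ∧
  ∀ n : ℕ,
    ν.map (fun u => ((fun i : Fin (n + 1) => u i), u (n + 1)))
      = (ν.map (fun u => fun i : Fin (n + 1) => u i)) ⊗ₘ
        (κ.comap (fun v : Fin (n + 1) → M => v (Fin.last n)) (measurable_pi_apply _))

namespace MeasureTheory.Measure

variable {α β γ : Type*} [MeasurableSpace α] [MeasurableSpace β] [MeasurableSpace γ]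

lemma map_prodMap_compProd_comap (μ : Measure α) [SFinite μ] (κ : Kernel β γ)
    [IsSFiniteKernel κ] {g : α → β} (hg : Measurable g) :
    (μ ⊗ₘ κ.comap g hg).map (Prod.map g id) = μ.map g ⊗ₘ κ := by
  ext s hs
  rw [map_apply (hg.prodMap measurable_id) hs, compProd_apply (hg.prodMap measurable_id hs),
    compProd_apply hs, lintegral_map (Kernel.measurable_kernel_prodMk_left hs) hg]
  rfl

lemma comap_comp_eq_comp_map (μ : Measure α) (κ : Kernel β γ) {g : α → β}
    (hg : Measurable g) : κ.comap g hg ∘ₘ μ = κ ∘ₘ μ.map g := by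
  rw [← deterministic_comp_eq_map hg, comp_assoc, Kernel.comp_deterministic_eq_comap]

end MeasureTheory.Measure

section PathSpace

variable {M : Type*} [MeasurableSpace M]

lemma measurable_shift : Measurable (shift (M := M)) :=
  measurable_pi_lambda _ fun _ => measurable_pi_apply _

lemma measurable_initSeg (n : ℕ) :
    Measurable (fun u : ℕ → M => fun i : Fin (n + 1) => u i) :=
  measurable_pi_lambda _ fun _ => measurable_pi_apply _

lemma measurable_snoc (n : ℕ) :
    Measurable (fun p : (Fin (n + 1) → M) × M => (Fin.snoc p.1 p.2 : Fin (n + 2) → M)) := by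
  refine measurable_pi_lambda _ fun i => Fin.lastCases ?_ (fun j => ?_) i
  · simp only [Fin.snoc_last]
    fun_prop
  · simp only [Fin.snoc_castSucc]
    fun_prop

lemma Measure.ext_of_map_initSeg {ν₁ ν₂ : Measure (ℕ → M)} [IsFiniteMeasure ν₁]
    (h : ∀ n, ν₁.map (fun u => fun i : Fin (n + 1) => u i)
      = ν₂.map (fun u => fun i : Fin (n + 1) => u i)) : ν₁ = ν₂ := by
  have preimage_eq : ∀ n {S : Set (Fin (n + 1) → M)}, MeasurableSet S →
      ν₁ ((fun (u : ℕ → M) (i : Fin (n + 1)) => u i) ⁻¹' S)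
        = ν₂ ((fun (u : ℕ → M) (i : Fin (n + 1)) => u i) ⁻¹' S) :=
    fun n S hS => by
      rw [← Measure.map_apply (measurable_initSeg n) hS, h,
        Measure.map_apply (measurable_initSeg n) hS]
  refine ext_of_generate_finite _ generateFrom_measurableCylinders.symm
    isPiSystem_measurableCylinders (fun s hs => ?_) (preimage_eq 0 MeasurableSet.univ)
  obtain ⟨I, S, hS, rfl⟩ := (mem_measurableCylinders _).mp hs
  have hI : ∀ i ∈ I, i < I.sup id + 1 := fun i hi => Nat.lt_succ_of_le (I.le_sup (f := id) hi)
  let p : (Fin (I.sup id + 1) → M) → (∀ i : I, M) := fun v i => v ⟨i, hI i i.2⟩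
  have hp : Measurable p := measurable_pi_lambda _ fun _ => measurable_pi_apply _
  exact preimage_eq _ (hp hS)

variable {κ : Kernel M M} [IsMarkovKernel κ] {μ : Measure M} {ν : Measure (ℕ → M)}

lemma IsPathMeasure.map_eval_succ (hν : IsPathMeasure κ μ ν) (n : ℕ) :
    ν.map (fun u => u (n + 1)) = κ ∘ₘ ν.map (fun u => u n) := by
  have := hν.1
  rw [← Measure.snd_map_prodMk (measurable_initSeg n), hν.2.2 n, Measure.snd_compProd,
    Measure.comap_comp_eq_comp_map, Measure.map_map (measurable_pi_apply _) (measurable_initSeg n)]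
  rfl

lemma IsPathMeasure.map_initSeg_eq {ν' : Measure (ℕ → M)} (hν : IsPathMeasure κ μ ν)
    (hν' : IsPathMeasure κ μ ν') (n : ℕ) :
    ν.map (fun u => fun i : Fin (n + 1) => u i)
      = ν'.map (fun u => fun i : Fin (n + 1) => u i) := by
  induction n with
  | zero =>
    have initSeg_zero : ∀ ν : Measure (ℕ → M), ν.map (fun u => fun i : Fin 1 => u i)
        = (ν.map (fun u => u 0)).map (fun x _ => x) := fun ν => by
      rw [Measure.map_map (by fun_prop) (by fun_prop)]
      congr with u i
      simp [Fin.val_eq_zero]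
    rw [initSeg_zero, initSeg_zero, hν.2.1, hν'.2.1]
  | succ n ih =>
    have initSeg_succ : ∀ ν : Measure (ℕ → M), ν.map (fun u => fun i : Fin (n + 2) => u i)
        = (ν.map (fun u => ((fun i : Fin (n + 1) => u i), u (n + 1)))).map
            (fun p => Fin.snoc p.1 p.2) := fun ν => by
      rw [Measure.map_map (measurable_snoc n) ((measurable_initSeg n).prodMk
        (measurable_pi_apply _))]
      congr with u i
      refine Fin.lastCases ?_ (fun j => ?_) i <;> simp
    rw [initSeg_succ, initSeg_succ, hν.2.2 n, hν'.2.2 n, ih]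

lemma IsPathMeasure.unique {ν' : Measure (ℕ → M)} (hν : IsPathMeasure κ μ ν)
    (hν' : IsPathMeasure κ μ ν') : ν = ν' :=
  have := hν.1
  Measure.ext_of_map_initSeg (hν.map_initSeg_eq hν')

lemma IsPathMeasure.map_shift_map_prodMk_eq_compProd (hν : IsPathMeasure κ μ ν) (n : ℕ) :
    (ν.map shift).map (fun u => ((fun i : Fin (n + 1) => u i), u (n + 1)))
      = (ν.map shift).map (fun u => fun i : Fin (n + 1) => u i) ⊗ₘ
        κ.comap (fun v : Fin (n + 1) → M => v (Fin.last n)) (measurable_pi_apply _) := by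
  have := hν.1
  let tail : (Fin (n + 2) → M) → Fin (n + 1) → M := fun v i => v i.succ
  have htail : Measurable tail := measurable_pi_lambda _ fun _ => measurable_pi_apply _
  have comap_last : κ.comap (fun v : Fin (n + 2) → M => v (Fin.last (n + 1)))
      (measurable_pi_apply _) = (κ.comap (fun v => v (Fin.last n)) (measurable_pi_apply _)).comap
        tail htail := by
    ext1 v
    simp [tail, Fin.succ_last]
  calc (ν.map shift).map (fun u => ((fun i : Fin (n + 1) => u i), u (n + 1)))
      _ = (ν.map (fun u => ((fun i : Fin (n + 2) => u i), u (n + 2)))).map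
            (Prod.map tail id) := by
        rw [Measure.map_map (by fun_prop) measurable_shift,
          Measure.map_map (htail.prodMap measurable_id) (by fun_prop)]
        rfl
      _ = (ν.map (fun u => fun i : Fin (n + 2) => u i)).map tail ⊗ₘ
            κ.comap (fun v => v (Fin.last n)) (measurable_pi_apply _) := by
        rw [hν.2.2, comap_last, Measure.map_prodMap_compProd_comap]
      _ = _ := by
        rw [Measure.map_map htail (measurable_initSeg _),
          Measure.map_map (measurable_initSeg _) measurable_shift]
        rfl

lemma IsPathMeasure.map_shift (hν : IsPathMeasure κ μ ν) :
    IsPathMeasure κ (κ ∘ₘ μ) (ν.map shift) := by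
  have := hν.1
  refine ⟨Measure.isProbabilityMeasure_map measurable_shift.aemeasurable, ?_,
    hν.map_shift_map_prodMk_eq_compProd⟩
  rw [Measure.map_map (measurable_pi_apply 0) measurable_shift, ← hν.2.1]
  exact hν.map_eval_succ 0

end PathSpace

theorem stmt0_general {M : Type*} [MeasurableSpace M] (κ : Kernel M M) [IsMarkovKernel κ]
    (μ : Measure M)
    (hinv : μ.bind (fun x => κ x) = μ)
    (ν : Measure (ℕ → M)) (hν : IsPathMeasure κ μ ν) :
    MeasurePreserving shift ν ν := by
  have hshift := hν.map_shift
  rw [hinv] at hshift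
  exact ⟨measurable_shift, hshift.unique hν⟩

/-- If `μ` is invariant for the Markov kernel `κ`, then the shift map is
measure-preserving for the path measure of the chain started from `μ`. -/
theorem stmt0 {M : Type*} [MeasurableSpace M] (κ : Kernel M M) [IsMarkovKernel κ]
    (μ : Measure M) [IsProbabilityMeasure μ]
    (hinv : μ.bind (fun x => κ x) = μ)
    (ν : Measure (ℕ → M)) (hν : IsPathMeasure κ μ ν) :
    MeasurePreserving shift ν ν :=
  stmt0_general κ μ hinv ν hν
end

section
/- Let M be a measurable space, κ a Markov kernel from M to M, and μ a probability measure invariant for κ. Let h : M → ℝ be square-integrable with respect to μ (h ∈ L²(μ)), with h ≥ 0 μ-almost everywhere, and suppose h(x) ≤ ∫ h d(κ x) for μ-almost every x. Then for μ-almost every x, h(y) = h(x) for (κ x)-almost every y; in particular h(x) = ∫ h d(κ x) for μ-almost every x. -/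
open MeasureTheory ProbabilityTheory Filter

/-! Put `ν = μ ⊗ₘ κ` and `Ph x = ∫ h d(κ x)`; invariance says that both marginals of `ν`
are `μ`. Integrating the subharmonic inequality `h ≤ Ph` against `μ` gives equal integrals,
so `h = Ph` a.e. For the harmonic `h ∈ L²(μ)`, expanding the square and using the marginals
gives `∫ (h y - h x)² dν(x, y) = 2 (∫ h² dμ - ∫ h · Ph dμ) = 0`, hence `h y = h x` for
`ν`-a.e. `(x, y)`. -/

namespace ProbabilityTheory

variable {α : Type*} [MeasurableSpace α] {μ : Measure α}

lemma measurePreserving_fst_compProd {β : Type*} [MeasurableSpace β] [SFinite μ]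
    (κ : Kernel α β) [IsMarkovKernel κ] : MeasurePreserving Prod.fst (μ ⊗ₘ κ) μ :=
  ⟨measurable_fst, Measure.fst_compProd μ κ⟩

lemma measurePreserving_snd_compProd_of_comp_eq [SFinite μ] {κ : Kernel α α}
    [IsSFiniteKernel κ] (hinv : κ ∘ₘ μ = μ) : MeasurePreserving Prod.snd (μ ⊗ₘ κ) μ :=
  ⟨measurable_snd, by rw [← Measure.snd, Measure.snd_compProd, hinv]⟩

lemma _root_.MeasureTheory.MeasurePreserving.integral_comp_of_aestronglyMeasurable
    {β E : Type*} [MeasurableSpace β] [NormedAddCommGroup E] [NormedSpace ℝ E]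
    {ν : Measure β} {g : α → β} (hg : MeasurePreserving g μ ν) {f : β → E}
    (hf : AEStronglyMeasurable f ν) : ∫ x, f (g x) ∂μ = ∫ y, f y ∂ν := by
  rw [← integral_map hg.aemeasurable (hg.map_eq ▸ hf), hg.map_eq]

lemma integrable_integral_of_comp_eq [SFinite μ] {κ : Kernel α α} [IsSFiniteKernel κ]
    (hinv : κ ∘ₘ μ = μ) {f : α → ℝ} (hf : Integrable f μ) :
    Integrable (fun x ↦ ∫ y, f y ∂κ x) μ :=
  ((measurePreserving_snd_compProd_of_comp_eq hinv).integrable_comp_of_integrable hf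
    ).integral_compProd

lemma integral_integral_of_comp_eq [SFinite μ] {κ : Kernel α α} [IsSFiniteKernel κ]
    (hinv : κ ∘ₘ μ = μ) {f : α → ℝ} (hf : Integrable f μ) :
    ∫ x, ∫ y, f y ∂κ x ∂μ = ∫ x, f x ∂μ := by
  have hsnd := measurePreserving_snd_compProd_of_comp_eq hinv
  have hf₂ : Integrable (fun p : α × α ↦ f p.2) (μ ⊗ₘ κ) := hsnd.integrable_comp_of_integrable hf
  rw [← Measure.integral_compProd hf₂]
  exact hsnd.integral_comp_of_aestronglyMeasurable hf.1

lemma ae_eq_integral_of_ae_le_integral [SFinite μ] {κ : Kernel α α} [IsSFiniteKernel κ]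
    (hinv : κ ∘ₘ μ = μ) {h : α → ℝ} (hh : Integrable h μ)
    (hsub : ∀ᵐ x ∂μ, h x ≤ ∫ y, h y ∂κ x) : ∀ᵐ x ∂μ, h x = ∫ y, h y ∂κ x :=
  (integral_eq_iff_of_ae_le hh (integrable_integral_of_comp_eq hinv hh) hsub).1
    (integral_integral_of_comp_eq hinv hh).symm

lemma integral_compProd_sub_sq [SFinite μ] {κ : Kernel α α} [IsMarkovKernel κ]
    (hinv : κ ∘ₘ μ = μ) {h : α → ℝ} (hh : MemLp h 2 μ) :
    ∫ p, (h p.2 - h p.1) ^ 2 ∂(μ ⊗ₘ κ) =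
      2 * (∫ x, h x ^ 2 ∂μ - ∫ x, h x * ∫ y, h y ∂κ x ∂μ) := by
  have hfst := measurePreserving_fst_compProd (μ := μ) κ
  have hsnd := measurePreserving_snd_compProd_of_comp_eq hinv
  have hL2fst : MemLp (fun p : α × α ↦ h p.1) 2 (μ ⊗ₘ κ) := hh.comp_measurePreserving hfst
  have hL2snd : MemLp (fun p : α × α ↦ h p.2) 2 (μ ⊗ₘ κ) := hh.comp_measurePreserving hsnd
  have hsq : AEStronglyMeasurable (fun x ↦ h x ^ 2) μ := hh.1.pow 2
  have i₁ : Integrable (fun p : α × α ↦ h p.2 ^ 2) (μ ⊗ₘ κ) := hL2snd.integrable_sq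
  have i₂ : Integrable (fun p : α × α ↦ h p.1 ^ 2) (μ ⊗ₘ κ) := hL2fst.integrable_sq
  have i₃ : Integrable (fun p : α × α ↦ h p.1 * h p.2) (μ ⊗ₘ κ) := hL2fst.integrable_mul hL2snd
  have hcross : ∫ p, h p.1 * h p.2 ∂(μ ⊗ₘ κ) = ∫ x, h x * ∫ y, h y ∂κ x ∂μ := by
    rw [Measure.integral_compProd i₃]
    simp only [integral_const_mul]
  calc ∫ p, (h p.2 - h p.1) ^ 2 ∂(μ ⊗ₘ κ)
      = ∫ p, h p.2 ^ 2 ∂(μ ⊗ₘ κ) + ∫ p, h p.1 ^ 2 ∂(μ ⊗ₘ κ)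
          - 2 * ∫ p, h p.1 * h p.2 ∂(μ ⊗ₘ κ) := by
        rw [← integral_const_mul, ← integral_add i₁ i₂,
          ← integral_sub (f := fun p ↦ h p.2 ^ 2 + h p.1 ^ 2) (i₁.add i₂) (i₃.const_mul 2)]
        congr 1 with p
        ring
    _ = 2 * (∫ x, h x ^ 2 ∂μ - ∫ x, h x * ∫ y, h y ∂κ x ∂μ) := by
        rw [hsnd.integral_comp_of_aestronglyMeasurable hsq,
          hfst.integral_comp_of_aestronglyMeasurable hsq, hcross]
        ring

lemma ae_ae_eq_of_memLp_two_of_ae_eq_integral [SFinite μ] {κ : Kernel α α} [IsMarkovKernel κ]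
    (hinv : κ ∘ₘ μ = μ) {h : α → ℝ} (hh : MemLp h 2 μ)
    (hharm : ∀ᵐ x ∂μ, h x = ∫ y, h y ∂κ x) : ∀ᵐ x ∂μ, ∀ᵐ y ∂κ x, h y = h x := by
  have hzero : ∫ p, (h p.2 - h p.1) ^ 2 ∂(μ ⊗ₘ κ) = 0 := by
    rw [integral_compProd_sub_sq hinv hh, sub_eq_zero.2, mul_zero]
    refine integral_congr_ae ?_
    filter_upwards [hharm] with x hx
    rw [← hx, sq]
  have hint : Integrable (fun p : α × α ↦ (h p.2 - h p.1) ^ 2) (μ ⊗ₘ κ) :=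
    ((hh.comp_measurePreserving (measurePreserving_snd_compProd_of_comp_eq hinv)).sub
      (hh.comp_measurePreserving (measurePreserving_fst_compProd κ))).integrable_sq
  have hae := (integral_eq_zero_iff_of_nonneg (fun _ ↦ sq_nonneg _) hint).1 hzero
  filter_upwards [Measure.ae_ae_of_ae_compProd hae] with x hx
  filter_upwards [hx] with y hy
  simpa [sub_eq_zero] using hy

end ProbabilityTheory

theorem stmt5_general {M : Type*} [MeasurableSpace M] (κ : Kernel M M) [IsMarkovKernel κ]
    (μ : Measure M) [IsProbabilityMeasure μ]
    (hinv : μ.bind (fun x => κ x) = μ)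
    (h : M → ℝ) (hL2 : MemLp h 2 μ)
    (hsub : ∀ᵐ x ∂μ, h x ≤ ∫ y, h y ∂(κ x)) :
    (∀ᵐ x ∂μ, ∀ᵐ y ∂(κ x), h y = h x) ∧ (∀ᵐ x ∂μ, h x = ∫ y, h y ∂(κ x)) := by
  have hinv' : κ ∘ₘ μ = μ := hinv
  have hharm := ae_eq_integral_of_ae_le_integral hinv' (hL2.integrable one_le_two) hsub
  exact ⟨ae_ae_eq_of_memLp_two_of_ae_eq_integral hinv' hL2 hharm, hharm⟩

/-- Rigidity: a nonnegative `L²(μ)` function that is subharmonic for a Markov kernel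
with invariant probability measure `μ` is a.s. constant along one transition; in
particular it is harmonic. -/
theorem stmt5 {M : Type*} [MeasurableSpace M] (κ : Kernel M M) [IsMarkovKernel κ]
    (μ : Measure M) [IsProbabilityMeasure μ]
    (hinv : μ.bind (fun x => κ x) = μ)
    (h : M → ℝ) (hL2 : MemLp h 2 μ)
    (hpos : 0 ≤ᵐ[μ] h)
    (hsub : ∀ᵐ x ∂μ, h x ≤ ∫ y, h y ∂(κ x)) :
    (∀ᵐ x ∂μ, ∀ᵐ y ∂(κ x), h y = h x) ∧ (∀ᵐ x ∂μ, h x = ∫ y, h y ∂(κ x)) :=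
  stmt5_general κ μ hinv h hL2 hsub
end

section
/- Let M be a measurable space, κ a Markov kernel from M to M, and μ a probability measure invariant for κ. Call a measurable set A ⊆ M invariant if ∫_A κ x A dμ(x) = μ A. Then the collection of invariant sets contains the empty set and all of M, is closed under complementation, and is closed under countable unions. -/
/-!
Since `κ x A ≤ 1`, the equation `∫_A κ x A dμ = μ A` says exactly that `κ x A = 1` for
`μ`-a.e. `x ∈ A`; in this form closure under countable unions is immediate. For complements,
invariance of `μ` gives `∫ κ x A dμ = μ A`, so `∫_{Aᶜ} κ x A dμ = 0`: almost every point of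
`Aᶜ` is sent into `A` with probability `0`, i.e. into `Aᶜ` with probability `1`.
-/

open MeasureTheory ProbabilityTheory Filter

/-- A measurable set `A` is invariant for the stationary Markov system `(κ, μ)` if
`∫_A κ x A dμ(x) = μ A`. -/
def IsInvariantSet {M : Type*} [MeasurableSpace M] (κ : Kernel M M) (μ : Measure M)
    (A : Set M) : Prop :=
  MeasurableSet A ∧ ∫⁻ x in A, κ x A ∂μ = μ A

section

variable {M : Type*} [MeasurableSpace M] {κ : Kernel M M} {μ : Measure M} {A : Set M}

lemma isInvariantSet_iff_ae [IsMarkovKernel κ] [IsFiniteMeasure μ] :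
    IsInvariantSet κ μ A ↔ MeasurableSet A ∧ ∀ᵐ x ∂μ.restrict A, κ x A = 1 := by
  refine and_congr_right fun _ => ⟨fun h => ?_, fun h => ?_⟩
  · refine ae_eq_of_ae_le_of_lintegral_le (.of_forall fun _ => prob_le_one) ?_
      aemeasurable_const ?_
    · rw [h]
      exact measure_ne_top μ A
    · rw [h, lintegral_const, Measure.restrict_apply_univ, one_mul]
  · rw [lintegral_congr_ae h, setLIntegral_one]

lemma IsInvariantSet.setLIntegral_compl_eq_zero [IsFiniteMeasure μ] (hinv : μ.bind κ = μ)
    (h : IsInvariantSet κ μ A) : ∫⁻ x in Aᶜ, κ x A ∂μ = 0 := by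
  have htotal : ∫⁻ x, κ x A ∂μ = μ A := by
    conv_rhs => rw [← hinv]
    rw [Measure.bind_apply h.1 κ.aemeasurable]
  have hsplit := lintegral_add_compl (fun x => κ x A) h.1 (μ := μ)
  rw [htotal, h.2] at hsplit
  exact (ENNReal.add_right_inj (measure_ne_top μ A)).mp (hsplit.trans (add_zero _).symm)

lemma IsInvariantSet.compl [IsMarkovKernel κ] [IsFiniteMeasure μ] (hinv : μ.bind κ = μ)
    (h : IsInvariantSet κ μ A) : IsInvariantSet κ μ Aᶜ := by
  have hzero : ∀ᵐ x ∂μ.restrict Aᶜ, κ x A = 0 :=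
    (lintegral_eq_zero_iff (κ.measurable_coe h.1)).mp (h.setLIntegral_compl_eq_zero hinv)
  refine isInvariantSet_iff_ae.mpr ⟨h.1.compl, ?_⟩
  filter_upwards [hzero] with x hx
  exact (prob_compl_eq_one_iff h.1).mpr hx

lemma IsInvariantSet.iUnion [IsMarkovKernel κ] [IsFiniteMeasure μ] {ι : Type*} [Countable ι]
    {s : ι → Set M} (h : ∀ i, IsInvariantSet κ μ (s i)) : IsInvariantSet κ μ (⋃ i, s i) := by
  refine isInvariantSet_iff_ae.mpr
    ⟨.iUnion fun i => (h i).1, (ae_restrict_iUnion_iff _ _).mpr fun i => ?_⟩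
  filter_upwards [(isInvariantSet_iff_ae.mp (h i)).2] with x hx
  exact le_antisymm prob_le_one (hx ▸ measure_mono (Set.subset_iUnion s i))

end

/-- The invariant sets of a stationary Markov system form a σ-algebra: they contain
`∅` and `univ`, and are closed under complements and countable unions. -/
theorem stmt6 {M : Type*} [MeasurableSpace M] (κ : Kernel M M) [IsMarkovKernel κ]
    (μ : Measure M) [IsProbabilityMeasure μ]
    (hinv : μ.bind (fun x => κ x) = μ) :
    IsInvariantSet κ μ (∅ : Set M) ∧
    IsInvariantSet κ μ (Set.univ : Set M) ∧
    (∀ A : Set M, IsInvariantSet κ μ A → IsInvariantSet κ μ Aᶜ) ∧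
    (∀ A : ℕ → Set M, (∀ n, IsInvariantSet κ μ (A n)) →
      IsInvariantSet κ μ (⋃ n, A n)) :=
  ⟨⟨.empty, by simp⟩, ⟨.univ, by simp⟩, fun _ => IsInvariantSet.compl hinv,
    fun _ => IsInvariantSet.iUnion⟩
end

section
/- (Proposition 4.1, convergence of standard DMD for random systems.) Let M be a measurable space, κ a Markov kernel from M to M, μ a probability measure invariant for κ, ν the path measure on ℕ → M of the chain started from μ, and S the shift on paths; assume S is ergodic with respect to ν. Let f : Fin k → (M → ℂ) be measurable functions, each square-integrable with respect to μ and linearly independent in L²(μ), and suppose there is a matrix K : Matrix (Fin k) (Fin k) ℂ such that for μ-almost every x and every i, ∫ f i d(κ x) = Σ_j K i j · f j (x) (the span of the f i is an invariant subspace of the stochastic Koopman operator with matrix K). For a path u and n ≥ 1, define the k × k matrices G₀(n,u) with entries (1/n) Σ_{m=0}^{n−1} f i (u m) · conj(f j (u m)) and G₁(n,u) with entries (1/n) Σ_{m=0}^{n−1} f i (u (m+1)) · conj(f j (u m)). Then for ν-almost every path u: G₀(n,u) is invertible for all sufficiently large n, and G₁(n,u) · (G₀(n,u))⁻¹ converges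 to K as n → ∞. -/
/-!
For ν-almost every path, the ergodic theorem for the shift, applied to
`u ↦ f i (u 0) * conj (f j (u 0))` and `u ↦ f i (u 1) * conj (f j (u 0))`, gives
`G₀(n, u) → G` and `G₁(n, u) → K * G`, where `G i j = ∫ f i * conj (f j) dμ`: the second
limit is `∫ (∫ f i dκ x) * conj (f j x) dμ(x)` because `(u 0, u 1)` has law `μ ⊗ κ`, and the
invariance hypothesis rewrites the inner integral as `∑ l, K i l * f l x`. `G` is the
transpose of the Gram matrix of the `f i` in `L²(μ)`, hence invertible by linear independence,
so `G₀(n, u)` is eventually invertible and `G₁(n, u) * G₀(n, u)⁻¹ → K * G * G⁻¹ = K`.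

Birkhoff's pointwise ergodic theorem is derived from the maximal ergodic theorem
(Garsia's argument): if `∫ g < 0`, the set where the Birkhoff sums of `g` are unbounded above
is invariant and contained in the set where some Birkhoff sum is positive, on which `g` has
nonnegative integral; so it is not of full measure, hence null by ergodicity.
-/

open MeasureTheory ProbabilityTheory Filter

open Set

section Birkhoff

variable {X : Type*} {T : X → X} {g : X → ℝ}

lemma partialSups_birkhoffSum_nonneg (N : ℕ) (x : X) :
    0 ≤ partialSups (birkhoffSum T g) N x := by
  simpa using le_partialSups_of_le (birkhoffSum T g) (Nat.zero_le N) x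

lemma partialSups_birkhoffSum_le_add_comp (N : ℕ) {x : X}
    (hx : 0 < partialSups (birkhoffSum T g) N x) :
    partialSups (birkhoffSum T g) N x ≤ g x + partialSups (birkhoffSum T g) N (T x) := by
  rw [Pi.partialSups_apply] at hx ⊢
  obtain ⟨_ | j, hjN, hj⟩ := exists_partialSups_eq (fun n => birkhoffSum T g n x) N
  · simp [hj] at hx
  · rw [hj, birkhoffSum_succ', Pi.partialSups_apply]
    gcongr
    exact le_partialSups_of_le (fun n => birkhoffSum T g n (T x)) (by omega)

lemma bddAbove_range_birkhoffSum_comp_iff (x : X) :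
    BddAbove (range fun n => birkhoffSum T g n (T x)) ↔
      BddAbove (range fun n => birkhoffSum T g n x) := by
  simp only [bddAbove_def, forall_mem_range]
  constructor
  · rintro ⟨C, hC⟩
    refine ⟨max 0 (g x + C), fun n => ?_⟩
    cases n with
    | zero => simp
    | succ n => simpa [birkhoffSum_succ'] using Or.inr (hC n)
  · rintro ⟨C, hC⟩
    refine ⟨C - g x, fun n => ?_⟩
    have := hC (n + 1)
    rw [birkhoffSum_succ'] at this
    linarith

variable [MeasurableSpace X] {ν : Measure X}

lemma measurable_birkhoffSum (hT : Measurable T) (hg : Measurable g) (n : ℕ) :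
    Measurable (birkhoffSum T g n) :=
  Finset.measurable_sum _ fun k _ => hg.comp (hT.iterate k)

lemma integrable_birkhoffSum (hT : MeasurePreserving T ν ν) (hg : Integrable g ν) (n : ℕ) :
    Integrable (birkhoffSum T g n) ν :=
  integrable_finsetSum _ fun k _ => (hT.iterate k).integrable_comp_of_integrable hg

lemma measurable_partialSups_birkhoffSum (hT : Measurable T) (hg : Measurable g) (N : ℕ) :
    Measurable (partialSups (birkhoffSum T g) N) := by
  induction N with
  | zero => simpa using measurable_birkhoffSum hT hg 0
  | succ N ih => simpa using ih.sup (measurable_birkhoffSum hT hg (N + 1))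

lemma integrable_partialSups_birkhoffSum (hT : MeasurePreserving T ν ν) (hg : Integrable g ν)
    (N : ℕ) : Integrable (partialSups (birkhoffSum T g) N) ν := by
  induction N with
  | zero => simp
  | succ N ih => simpa using ih.sup (integrable_birkhoffSum hT hg (N + 1))

lemma setIntegral_partialSups_birkhoffSum_pos_nonneg (hT : MeasurePreserving T ν ν)
    (hgm : Measurable g) (hg : Integrable g ν) (N : ℕ) :
    0 ≤ ∫ x in {x | 0 < partialSups (birkhoffSum T g) N x}, g x ∂ν := by
  set F := partialSups (birkhoffSum T g) N
  set E := {x | 0 < F x}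
  have hFm : Measurable F := measurable_partialSups_birkhoffSum hT.measurable hgm N
  have hF : Integrable F ν := integrable_partialSups_birkhoffSum hT hg N
  have hFT : Integrable (F ∘ T) ν := hT.integrable_comp_of_integrable hF
  have hE : MeasurableSet E := measurableSet_lt measurable_const hFm
  have hFE : ∫ x in E, F x ∂ν = ∫ x, F x ∂ν :=
    setIntegral_eq_integral_of_forall_compl_eq_zero fun x hx =>
      le_antisymm (not_lt.mp hx) (partialSups_birkhoffSum_nonneg N x)
  have hFTE : ∫ x in E, F (T x) ∂ν ≤ ∫ x, F (T x) ∂ν :=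
    setIntegral_le_integral hFT (ae_of_all _ fun x => partialSups_birkhoffSum_nonneg N (T x))
  have hFT_eq : ∫ x, F (T x) ∂ν = ∫ x, F x ∂ν := by
    rw [← integral_map hT.aemeasurable hFm.aestronglyMeasurable, hT.map_eq]
  calc 0 ≤ ∫ x in E, F x ∂ν - ∫ x in E, F (T x) ∂ν := by linarith
    _ = ∫ x in E, (F x - F (T x)) ∂ν := (integral_sub hF.integrableOn hFT.integrableOn).symm
    _ ≤ ∫ x in E, g x ∂ν := setIntegral_mono_on (hF.sub hFT).integrableOn hg.integrableOn hE
        fun x hx => by linarith [partialSups_birkhoffSum_le_add_comp (T := T) N hx]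

theorem setIntegral_exists_birkhoffSum_pos_nonneg (hT : MeasurePreserving T ν ν)
    (hgm : Measurable g) (hg : Integrable g ν) :
    0 ≤ ∫ x in {x | ∃ n, 0 < birkhoffSum T g n x}, g x ∂ν := by
  set E : ℕ → Set X := fun N => {x | 0 < partialSups (birkhoffSum T g) N x}
  have hE : ∀ N, MeasurableSet (E N) := fun N =>
    measurableSet_lt measurable_const (measurable_partialSups_birkhoffSum hT.measurable hgm N)
  have hmono : Monotone E := fun M N hMN x hx =>
    hx.trans_le (partialSups_monotone (birkhoffSum T g) hMN x)
  have hunion : ⋃ N, E N = {x | ∃ n, 0 < birkhoffSum T g n x} := by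
    ext x
    simp only [E, mem_iUnion, mem_ofPred_eq, Pi.partialSups_apply]
    constructor
    · rintro ⟨N, hN⟩
      obtain ⟨n, -, hn⟩ := exists_partialSups_eq (fun n => birkhoffSum T g n x) N
      exact ⟨n, hn ▸ hN⟩
    · rintro ⟨n, hn⟩
      exact ⟨n, hn.trans_le (le_partialSups_of_le (fun n => birkhoffSum T g n x) le_rfl)⟩
  have := tendsto_setIntegral_of_monotone hE hmono hg.integrableOn
  rw [hunion] at this
  exact ge_of_tendsto this (Eventually.of_forall
    (setIntegral_partialSups_birkhoffSum_pos_nonneg hT hgm hg))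

theorem Ergodic.ae_bddAbove_birkhoffSum_of_integral_neg (hT : Ergodic T ν)
    (hgm : Measurable g) (hg : Integrable g ν) (hneg : ∫ x, g x ∂ν < 0) :
    ∀ᵐ x ∂ν, BddAbove (range fun n => birkhoffSum T g n x) := by
  set B := {x | BddAbove (range fun n => birkhoffSum T g n x)}
  have hB : MeasurableSet B :=
    measurableSet_bddAbove_range (measurable_birkhoffSum hT.measurable hgm)
  have hBinv : T ⁻¹' B = B := by
    ext x
    exact bddAbove_range_birkhoffSum_comp_iff x
  refine (hT.measure_self_or_compl_eq_zero hB hBinv).resolve_left fun hB0 => ?_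
  set E := {x | ∃ n, 0 < birkhoffSum T g n x}
  have hBE : Bᶜ ⊆ E := fun x hx => by
    simp only [B, mem_compl_iff, mem_ofPred_eq, bddAbove_def, forall_mem_range, not_exists,
      not_forall, not_le] at hx
    exact hx 0
  have hEfull : ν.restrict E = ν :=
    Measure.restrict_eq_self_of_ae_mem (measure_mono_null (compl_subset_comm.mp hBE) hB0)
  have := setIntegral_exists_birkhoffSum_pos_nonneg hT.toMeasurePreserving hgm hg
  rw [hEfull] at this
  linarith

variable [IsProbabilityMeasure ν]

theorem Ergodic.ae_eventually_birkhoffAverage_lt (hT : Ergodic T ν) (hgm : Measurable g)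
    (hg : Integrable g ν) {a : ℝ} (ha : ∫ x, g x ∂ν < a) :
    ∀ᵐ x ∂ν, ∀ᶠ n in atTop, birkhoffAverage ℝ T g n x < a := by
  obtain ⟨b, hgb, hba⟩ := exists_between ha
  have hneg : ∫ x, (g x - b) ∂ν < 0 := by
    rw [integral_sub hg (integrable_const b)]
    simpa using hgb
  filter_upwards [hT.ae_bddAbove_birkhoffSum_of_integral_neg (hgm.sub measurable_const)
    (hg.sub (integrable_const b)) hneg] with x ⟨C, hC⟩
  have hlim : Tendsto (fun n : ℕ => b + C / n) atTop (nhds b) := by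
    simpa using tendsto_const_nhds.add (tendsto_const_div_atTop_nhds_zero_nat C)
  filter_upwards [hlim.eventually_lt_const hba, eventually_gt_atTop 0] with n hn hn0
  refine lt_of_le_of_lt ?_ hn
  have hSn : birkhoffSum T g n x - n * b ≤ C := by
    have := hC ⟨n, rfl⟩
    simpa [birkhoffSum_sub, birkhoffSum, mul_comm] using this
  rw [birkhoffAverage, smul_eq_mul, inv_mul_le_iff₀ (by positivity)]
  rw [mul_add, mul_div_cancel₀ _ (by positivity)]
  linarith

theorem Ergodic.ae_forall_rat_eventually_birkhoffAverage_lt (hT : Ergodic T ν)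
    (hgm : Measurable g) (hg : Integrable g ν) :
    ∀ᵐ x ∂ν, ∀ q : ℚ, ∫ x, g x ∂ν < q → ∀ᶠ n in atTop, birkhoffAverage ℝ T g n x < q :=
  ae_all_iff.2 fun q => by
    by_cases hq : ∫ x, g x ∂ν < q
    · filter_upwards [hT.ae_eventually_birkhoffAverage_lt hgm hg hq] with x hx
      exact fun _ => hx
    · exact ae_of_all _ fun x h => absurd h hq

theorem Ergodic.ae_tendsto_birkhoffAverage (hT : Ergodic T ν) (hgm : Measurable g)
    (hg : Integrable g ν) :
    ∀ᵐ x ∂ν, Tendsto (fun n => birkhoffAverage ℝ T g n x) atTop (nhds (∫ x, g x ∂ν)) := by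
  filter_upwards [hT.ae_forall_rat_eventually_birkhoffAverage_lt hgm hg,
    hT.ae_forall_rat_eventually_birkhoffAverage_lt hgm.neg hg.neg] with x hup hlow
  refine tendsto_order.2 ⟨fun a ha => ?_, fun a ha => ?_⟩
  · obtain ⟨q, hIq, hqa⟩ := exists_rat_btwn (neg_lt_neg ha)
    filter_upwards [hlow q (by simpa only [Pi.neg_apply, integral_neg] using hIq)] with n hn
    rw [birkhoffAverage_neg] at hn
    simp only [Pi.neg_apply] at hn
    linarith
  · obtain ⟨q, hIq, hqa⟩ := exists_rat_btwn ha
    filter_upwards [hup q hIq] with n hn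
    exact hn.trans hqa

theorem Ergodic.ae_tendsto_birkhoffAverage_complex (hT : Ergodic T ν) {g : X → ℂ}
    (hgm : Measurable g) (hg : Integrable g ν) :
    ∀ᵐ x ∂ν, Tendsto (fun n => birkhoffAverage ℂ T g n x) atTop (nhds (∫ x, g x ∂ν)) := by
  filter_upwards [hT.ae_tendsto_birkhoffAverage (Complex.measurable_re.comp hgm) hg.re,
    hT.ae_tendsto_birkhoffAverage (Complex.measurable_im.comp hgm) hg.im] with x hre him
  have hparts : ∀ n, birkhoffAverage ℂ T g n x =
      ((birkhoffAverage ℝ T (fun y => (g y).re) n x : ℝ) : ℂ) +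
        ((birkhoffAverage ℝ T (fun y => (g y).im) n x : ℝ) : ℂ) * Complex.I := fun n => by
    apply Complex.ext <;> simp [birkhoffAverage, birkhoffSum, Complex.re_sum, Complex.im_sum]
  rw [← integral_re_add_im hg]
  simp only [hparts]
  exact ((Complex.continuous_ofReal.tendsto _).comp hre).add
    (((Complex.continuous_ofReal.tendsto _).comp him).mul_const _)

end Birkhoff

section Gram

variable {α ι : Type*} [MeasurableSpace α] {μ : Measure α} [Fintype ι] {f : ι → α → ℂ}

lemma MeasureTheory.MemLp.integrable_mul_conj {g h : α → ℂ} (hg : MemLp g 2 μ)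
    (hh : MemLp h 2 μ) :
    Integrable (fun x => g x * starRingEnd ℂ (h x)) μ :=
  hg.integrable_mul hh.star

lemma linearIndependent_toLp_of_ae (hL2 : ∀ i, MemLp (f i) 2 μ)
    (hindep : ∀ c : ι → ℂ, (∀ᵐ x ∂μ, ∑ i, c i * f i x = 0) → c = 0) :
    LinearIndependent ℂ fun i => (hL2 i).toLp (f i) := by
  refine Fintype.linearIndependent_iff.2 fun c hc => congrFun (hindep c ?_)
  filter_upwards [Lp.coeFn_fun_finsetSum Finset.univ (fun i => c i • (hL2 i).toLp (f i)),
    Lp.coeFn_zero ℂ 2 μ, ae_all_iff.2 fun i => Lp.coeFn_smul (c i) ((hL2 i).toLp (f i)),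
    ae_all_iff.2 fun i => (hL2 i).coeFn_toLp] with x hsum hzero hsmul hf
  rw [hc, hzero] at hsum
  simpa [hsmul, hf] using hsum.symm

open scoped ComplexOrder in
lemma det_integral_mul_conj_ne_zero [DecidableEq ι] (hL2 : ∀ i, MemLp (f i) 2 μ)
    (hindep : ∀ c : ι → ℂ, (∀ᵐ x ∂μ, ∑ i, c i * f i x = 0) → c = 0) :
    (Matrix.of fun i j => ∫ x, f i x * starRingEnd ℂ (f j x) ∂μ).det ≠ 0 := by
  have hgram : (Matrix.of fun i j => ∫ x, f i x * starRingEnd ℂ (f j x) ∂μ) =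
      (Matrix.gram ℂ fun i => (hL2 i).toLp (f i)).transpose := by
    ext i j
    simp only [Matrix.of_apply, Matrix.transpose_apply, Matrix.gram, L2.inner_def]
    refine integral_congr_ae ?_
    filter_upwards [(hL2 i).coeFn_toLp, (hL2 j).coeFn_toLp] with x hi hj
    simp [hi, hj]
  rw [hgram, Matrix.det_transpose]
  have hpos := Matrix.posDef_gram_of_linearIndependent (linearIndependent_toLp_of_ae hL2 hindep)
  exact ((Matrix.isUnit_iff_isUnit_det _).1 hpos.isUnit).ne_zero

end Gram

lemma Matrix.eventually_isUnit_and_tendsto_mul_inv {ι 𝕜 β : Type*} [Fintype ι]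
    [DecidableEq ι] [NormedField 𝕜] {l : Filter β} {A B : β → Matrix ι ι 𝕜}
    {C G : Matrix ι ι 𝕜} (hA : Tendsto A l (nhds (C * G)))
    (hB : Tendsto B l (nhds G)) (hG : G.det ≠ 0) :
    (∀ᶠ n in l, IsUnit (B n)) ∧ Tendsto (fun n => A n * (B n)⁻¹) l (nhds C) := by
  have hdet : Tendsto (fun n => (B n).det) l (nhds G.det) :=
    (continuous_id.matrix_det.tendsto G).comp hB
  have hinv : ContinuousAt Inv.inv G :=
    continuousAt_matrix_inv G (by rw [Ring.inverse_eq_inv']; exact continuousAt_inv₀ hG)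
  refine ⟨(hdet.eventually_ne hG).mono fun n hn => (B n).isUnit_iff_isUnit_det.2 hn.isUnit, ?_⟩
  have := hA.mul (hinv.tendsto.comp hB)
  rwa [Matrix.mul_assoc, Matrix.mul_nonsing_inv G hG.isUnit, Matrix.mul_one] at this

lemma shift_iterate_apply {M : Type*} (m : ℕ) (u : ℕ → M) (l : ℕ) :
    shift^[m] u l = u (l + m) := by
  induction m generalizing u with
  | zero => rfl
  | succ m ih => rw [Function.iterate_succ_apply, ih]; rfl

lemma MeasureTheory.Measure.map_prodMap_compProd_comap_s8 {α β γ : Type*} [MeasurableSpace α]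
    [MeasurableSpace β] [MeasurableSpace γ] (ρ : Measure α) [SFinite ρ] (κ : Kernel β γ)
    [IsSFiniteKernel κ]
    {e : α → β} (he : Measurable e) :
    (ρ ⊗ₘ κ.comap e he).map (Prod.map e id) = ρ.map e ⊗ₘ κ := by
  ext s hs
  rw [Measure.map_apply (he.prodMap measurable_id) hs,
    Measure.compProd_apply (he.prodMap measurable_id hs), Measure.compProd_apply hs,
    lintegral_map (Kernel.measurable_kernel_prodMk_left hs) he]
  rfl

namespace IsPathMeasure

variable {M : Type*} [MeasurableSpace M] {κ : Kernel M M} [IsMarkovKernel κ] {μ : Measure M}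
  {ν : Measure (ℕ → M)}

lemma map_eval (hν : IsPathMeasure κ μ ν) (hS : MeasurePreserving shift ν ν) (m : ℕ) :
    ν.map (fun u => u m) = μ := by
  induction m with
  | zero => exact hν.2.1
  | succ m ih =>
    calc ν.map (fun u => u (m + 1)) = (ν.map shift).map (fun u => u m) :=
          (Measure.map_map (measurable_pi_apply m) hS.measurable).symm
      _ = μ := by rw [hS.map_eq, ih]

lemma map_eval_zero_one (hν : IsPathMeasure κ μ ν) :
    ν.map (fun u => (u 0, u 1)) = μ ⊗ₘ κ := by
  obtain ⟨_, hμ, hstep⟩ := hν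
  have hinit : Measurable fun u : ℕ → M => fun i : Fin 1 => u i :=
    measurable_pi_lambda _ fun i => measurable_pi_apply _
  have hlast : Measurable fun v : Fin 1 → M => v (Fin.last 0) := measurable_pi_apply _
  rw [← hμ, show (fun u => u 0) = (fun v : Fin 1 → M => v (Fin.last 0)) ∘
      (fun u : ℕ → M => fun i : Fin 1 => u i) from rfl, ← Measure.map_map hlast hinit,
    ← Measure.map_prodMap_compProd_comap_s8 _ _ hlast, ← hstep 0,
    Measure.map_map (hlast.prodMap measurable_id) (hinit.prodMk (measurable_pi_apply 1))]
  rfl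

variable [SFinite μ]

lemma integral_comp_eval_zero_one (hν : IsPathMeasure κ μ ν) {E : Type*}
    [NormedAddCommGroup E] [NormedSpace ℝ E] [CompleteSpace E] {F : M × M → E}
    (hFm : StronglyMeasurable F) (hF : Integrable (fun u => F (u 0, u 1)) ν) :
    ∫ u, F (u 0, u 1) ∂ν = ∫ x, ∫ y, F (x, y) ∂κ x ∂μ := by
  have hπ : Measurable fun u : ℕ → M => (u 0, u 1) :=
    (measurable_pi_apply 0).prodMk (measurable_pi_apply 1)
  rw [← integral_map hπ.aemeasurable hFm.aestronglyMeasurable, hν.map_eval_zero_one,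
    Measure.integral_compProd]
  rw [← hν.map_eval_zero_one]
  exact (integrable_map_measure hFm.aestronglyMeasurable hπ.aemeasurable).2 hF

lemma ae_tendsto_average_pairs (hν : IsPathMeasure κ μ ν) (herg : Ergodic shift ν)
    {φ : M × M → ℂ} (hφm : Measurable φ) (hφ : Integrable (fun u => φ (u 0, u 1)) ν) :
    ∀ᵐ u ∂ν, Tendsto
      (fun n : ℕ => (1 / (n : ℂ)) * ∑ m ∈ Finset.range n, φ (u m, u (m + 1)))
      atTop (nhds (∫ x, ∫ y, φ (x, y) ∂κ x ∂μ)) := by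
  have := hν.1
  rw [← hν.integral_comp_eval_zero_one hφm.stronglyMeasurable hφ]
  filter_upwards [herg.ae_tendsto_birkhoffAverage_complex
    (hφm.comp ((measurable_pi_apply 0).prodMk (measurable_pi_apply 1))) hφ] with u hu
  simpa [birkhoffAverage, birkhoffSum, shift_iterate_apply, add_comm 1] using hu

end IsPathMeasure

lemma integral_integral_mul_conj_eq_mul {M ι : Type*} [MeasurableSpace M] [Fintype ι]
    {κ : Kernel M M} {μ : Measure M} {f : ι → M → ℂ} (hL2 : ∀ i, MemLp (f i) 2 μ)
    {K : Matrix ι ι ℂ} (hK : ∀ᵐ x ∂μ, ∀ i, ∫ y, f i y ∂κ x = ∑ j, K i j * f j x) (i j : ι) :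
    ∫ x, ∫ y, f i y * starRingEnd ℂ (f j x) ∂κ x ∂μ =
      (K * Matrix.of fun i j => ∫ x, f i x * starRingEnd ℂ (f j x) ∂μ) i j := by
  calc ∫ x, ∫ y, f i y * starRingEnd ℂ (f j x) ∂κ x ∂μ
      = ∫ x, ∑ l, K i l * (f l x * starRingEnd ℂ (f j x)) ∂μ := by
        refine integral_congr_ae ?_
        filter_upwards [hK] with x hx
        rw [integral_mul_const, hx i, Finset.sum_mul]
        simp only [mul_assoc]
    _ = ∑ l, K i l * ∫ x, f l x * starRingEnd ℂ (f j x) ∂μ := by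
        rw [integral_finsetSum _ fun l _ =>
          ((hL2 l).integrable_mul_conj (hL2 j)).const_mul _]
        simp only [integral_const_mul]
    _ = _ := by simp [Matrix.mul_apply]

theorem stmt8_general {M : Type*} [MeasurableSpace M] (κ : Kernel M M) [IsMarkovKernel κ]
    (μ : Measure M) [IsProbabilityMeasure μ]
    (ν : Measure (ℕ → M)) (hν : IsPathMeasure κ μ ν)
    (herg : Ergodic (shift : (ℕ → M) → ℕ → M) ν)
    (k : ℕ) (f : Fin k → M → ℂ)
    (hmeas : ∀ i, Measurable (f i)) (hL2 : ∀ i, MemLp (f i) 2 μ)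
    (hindep : ∀ c : Fin k → ℂ, (∀ᵐ x ∂μ, ∑ i, c i * f i x = 0) → c = 0)
    (K : Matrix (Fin k) (Fin k) ℂ)
    (hK : ∀ᵐ x ∂μ, ∀ i, ∫ y, f i y ∂(κ x) = ∑ j, K i j * f j x)
    (G₀ G₁ : ℕ → (ℕ → M) → Matrix (Fin k) (Fin k) ℂ)
    (hG₀ : G₀ = fun (n : ℕ) (u : ℕ → M) => Matrix.of fun i j =>
      (1 / (n : ℂ)) * ∑ m ∈ Finset.range n, f i (u m) * (starRingEnd ℂ) (f j (u m)))
    (hG₁ : G₁ = fun (n : ℕ) (u : ℕ → M) => Matrix.of fun i j =>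
      (1 / (n : ℂ)) * ∑ m ∈ Finset.range n, f i (u (m + 1)) * (starRingEnd ℂ) (f j (u m))) :
    ∀ᵐ u ∂ν,
      (∀ᶠ n in atTop, IsUnit (G₀ n u)) ∧
      Tendsto (fun n : ℕ => G₁ n u * (G₀ n u)⁻¹) atTop (nhds K) := by
  have hL2ν : ∀ i a, MemLp (fun u : ℕ → M => f i (u a)) 2 ν := fun i a =>
    (hL2 i).comp_measurePreserving
      ⟨measurable_pi_apply a, hν.map_eval herg.toMeasurePreserving a⟩
  set G : Matrix (Fin k) (Fin k) ℂ :=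
    Matrix.of fun i j => ∫ x, f i x * starRingEnd ℂ (f j x) ∂μ
  have hG₀lim : ∀ i j, ∀ᵐ u ∂ν, Tendsto (fun n => G₀ n u i j) atTop (nhds (G i j)) := by
    intro i j
    simpa [hG₀, G] using hν.ae_tendsto_average_pairs herg
      (φ := fun p => f i p.1 * starRingEnd ℂ (f j p.1)) (by fun_prop)
      ((hL2ν i 0).integrable_mul_conj (hL2ν j 0))
  have hG₁lim :
      ∀ i j, ∀ᵐ u ∂ν, Tendsto (fun n => G₁ n u i j) atTop (nhds ((K * G) i j)) := by
    intro i j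
    rw [← integral_integral_mul_conj_eq_mul hL2 hK]
    simpa [hG₁] using hν.ae_tendsto_average_pairs herg
      (φ := fun p => f i p.2 * starRingEnd ℂ (f j p.1)) (by fun_prop)
      ((hL2ν i 1).integrable_mul_conj (hL2ν j 0))
  filter_upwards [ae_all_iff.2 fun i => ae_all_iff.2 (hG₀lim i),
    ae_all_iff.2 fun i => ae_all_iff.2 (hG₁lim i)] with u hu₀ hu₁
  exact Matrix.eventually_isUnit_and_tendsto_mul_inv
    (tendsto_pi_nhds.2 fun i => tendsto_pi_nhds.2 (hu₁ i))
    (tendsto_pi_nhds.2 fun i => tendsto_pi_nhds.2 (hu₀ i))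
    (det_integral_mul_conj_ne_zero hL2 hindep)

/-- Proposition 4.1: convergence of standard DMD (Algorithm 1) for an ergodic random
dynamical system, when the observables span an invariant subspace of the stochastic
Koopman operator with matrix `K`. -/
theorem stmt8 {M : Type*} [MeasurableSpace M] (κ : Kernel M M) [IsMarkovKernel κ]
    (μ : Measure M) [IsProbabilityMeasure μ]
    (hinv : μ.bind (fun x => κ x) = μ)
    (ν : Measure (ℕ → M)) (hν : IsPathMeasure κ μ ν)
    (herg : Ergodic (shift : (ℕ → M) → ℕ → M) ν)
    (k : ℕ) (hk : 1 ≤ k) (f : Fin k → M → ℂ)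
    (hmeas : ∀ i, Measurable (f i)) (hL2 : ∀ i, MemLp (f i) 2 μ)
    (hindep : ∀ c : Fin k → ℂ, (∀ᵐ x ∂μ, ∑ i, c i * f i x = 0) → c = 0)
    (K : Matrix (Fin k) (Fin k) ℂ)
    (hK : ∀ᵐ x ∂μ, ∀ i, ∫ y, f i y ∂(κ x) = ∑ j, K i j * f j x)
    (G₀ G₁ : ℕ → (ℕ → M) → Matrix (Fin k) (Fin k) ℂ)
    (hG₀ : G₀ = fun (n : ℕ) (u : ℕ → M) => Matrix.of fun i j =>
      (1 / (n : ℂ)) * ∑ m ∈ Finset.range n, f i (u m) * (starRingEnd ℂ) (f j (u m)))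
    (hG₁ : G₁ = fun (n : ℕ) (u : ℕ → M) => Matrix.of fun i j =>
      (1 / (n : ℂ)) * ∑ m ∈ Finset.range n, f i (u (m + 1)) * (starRingEnd ℂ) (f j (u m))) :
    ∀ᵐ u ∂ν,
      (∀ᶠ n in atTop, IsUnit (G₀ n u)) ∧
      Tendsto (fun n : ℕ => G₁ n u * (G₀ n u)⁻¹) atTop (nhds K) :=
  stmt8_general κ μ ν hν herg k f hmeas hL2 hindep K hK G₀ G₁ hG₀ hG₁
end
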